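/- For g⁺, g⁻ ∈ [0,1) and θ ∈ [1/4, 3/4], define g̃_θ := g if g ≤ θ and g̃_θ := g - 1 otherwise (applied to g⁺ and g⁻). Then the averaged difference satisfies ∫_{1/4}^{3/4} |g̃⁺_θ - g̃⁻_θ| dθ ≤ (5/2) · d(g⁺, g⁻), where d(g⁺,g⁻) := min(frac(g⁺ - g⁻), 1 - frac(g⁺ - g⁻)) is the quotient distance in ℝ/ℤ. -/

import Mathlib

/-- The lift `g̃_θ` of `g ∈ [0,1)`: `g` if `g ≤ θ`, and `g - 1` otherwise. -/
noncomputable def liftTheta (θ g : ℝ) : ℝ := if g ≤ θ then g else g - 1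

/-!
Write `δ = g⁺ - g⁻ ≥ 0` (the other case follows by symmetry), so `d = min δ (1 - δ)`.
The lifts differ by `δ` unless `θ ∈ [g⁻, g⁺)`, where they differ by `δ - 1`. A parameter
`θ ∈ [1/4, 3/4]` outside `[g⁻, g⁺)` forces `δ ≤ 3/4`, hence `δ ≤ 3 d`; this costs at most
`(1/2) · 3d`. The exceptional parameters form a set of measure at most `δ`, on which the
difference is `1 - δ`, costing `δ (1 - δ) ≤ d`.
-/

open MeasureTheory Set

lemma monotone_liftTheta (g : ℝ) : Monotone fun θ ↦ liftTheta θ g := by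
  intro x y hxy
  simp only [liftTheta]
  split_ifs <;> linarith

lemma abs_liftTheta_sub_of_le {a b : ℝ} (hab : a ≤ b) (hba : b - a ≤ 1) (θ : ℝ) :
    |liftTheta θ b - liftTheta θ a| = if θ ∈ Ico a b then 1 - (b - a) else b - a := by
  by_cases hθ : θ ∈ Ico a b
  · have hlift : liftTheta θ b - liftTheta θ a = b - a - 1 := by
      rw [liftTheta, liftTheta, if_neg hθ.2.not_ge, if_pos hθ.1]
      ring
    rw [if_pos hθ, hlift, abs_of_nonpos (by linarith)]
    ring
  · have hlift : liftTheta θ b - liftTheta θ a = b - a := by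
      rw [mem_Ico, not_and_or, not_le, not_lt] at hθ
      rcases hθ with hθ | hθ
      · simp [liftTheta, hθ.not_ge, (hθ.trans_le hab).not_ge]
      · simp [liftTheta, hθ, hab.trans hθ]
    rw [if_neg hθ, hlift, abs_of_nonneg (by linarith)]

lemma abs_liftTheta_sub_le {a b θ : ℝ} (ha : 0 ≤ a) (hab : a ≤ b) (hb : b ≤ 1)
    (hθ : θ ∈ Icc (1/4 : ℝ) (3/4)) :
    |liftTheta θ b - liftTheta θ a| ≤
      3 * min (b - a) (1 - (b - a)) + (Ico a b).indicator (fun _ ↦ 1 - (b - a)) θ := by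
  rw [abs_liftTheta_sub_of_le hab (by linarith)]
  split_ifs with h
  · rw [indicator_of_mem h]
    have : 0 ≤ min (b - a) (1 - (b - a)) := le_min (by linarith) (by linarith)
    linarith
  · rw [indicator_of_notMem h, add_zero]
    have : b - a ≤ 3 / 4 := by
      rw [mem_Ico, not_and_or, not_le, not_lt] at h
      rcases h with h | h <;> linarith [hθ.1, hθ.2]
    rw [mul_min_of_nonneg _ _ (by norm_num : (0 : ℝ) ≤ 3)]
    exact le_min (by linarith) (by linarith)

lemma intervalIntegral_indicator_const_le {μ : Measure ℝ} {a b c : ℝ} {s : Set ℝ}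
    (hab : a ≤ b) (hc : 0 ≤ c) (hs : MeasurableSet s) (hμs : μ s ≠ ⊤) :
    ∫ x in a..b, s.indicator (fun _ ↦ c) x ∂μ ≤ μ.real s * c := by
  rw [intervalIntegral.integral_of_le hab, setIntegral_indicator hs, setIntegral_const,
    smul_eq_mul]
  gcongr
  exact inter_subset_right

lemma integral_abs_liftTheta_sub_le_of_le {a b : ℝ} (ha : 0 ≤ a) (hab : a ≤ b) (hb : b ≤ 1) :
    ∫ θ in (1/4 : ℝ)..(3/4 : ℝ), |liftTheta θ b - liftTheta θ a| ≤
      (5/2) * min (b - a) (1 - (b - a)) := by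
  set d := min (b - a) (1 - (b - a))
  have hind : IntervalIntegrable ((Ico a b).indicator fun _ ↦ 1 - (b - a)) volume (1/4) (3/4) :=
    ((integrable_indicator_iff measurableSet_Ico).2
      (integrableOn_const (by simp))).intervalIntegrable
  have hlift : ∀ g, IntervalIntegrable (fun θ ↦ liftTheta θ g) volume (1/4) (3/4) :=
    fun g ↦ (monotone_liftTheta g).intervalIntegrable
  have hmass : (b - a) * (1 - (b - a)) ≤ d := le_min (by nlinarith) (by nlinarith)
  calc ∫ θ in (1/4 : ℝ)..(3/4 : ℝ), |liftTheta θ b - liftTheta θ a|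
      ≤ ∫ θ in (1/4 : ℝ)..(3/4 : ℝ), (3 * d + (Ico a b).indicator (fun _ ↦ 1 - (b - a)) θ) :=
        intervalIntegral.integral_mono_on (by norm_num) ((hlift b).sub (hlift a)).abs
          (intervalIntegrable_const.add hind) fun θ hθ ↦ abs_liftTheta_sub_le ha hab hb hθ
    _ = 3 * d / 2 + ∫ θ in (1/4 : ℝ)..(3/4 : ℝ), (Ico a b).indicator (fun _ ↦ 1 - (b - a)) θ := by
        rw [intervalIntegral.integral_add intervalIntegrable_const hind,
          intervalIntegral.integral_const, smul_eq_mul]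
        ring
    _ ≤ 3 * d / 2 + (b - a) * (1 - (b - a)) := by
        gcongr
        calc _ ≤ volume.real (Ico a b) * (1 - (b - a)) :=
              intervalIntegral_indicator_const_le (by norm_num) (by linarith) measurableSet_Ico
                measure_Ico_lt_top.ne
          _ = (b - a) * (1 - (b - a)) := by rw [Real.volume_real_Ico_of_le hab]
    _ ≤ 5 / 2 * d := by linarith

lemma min_fract_neg (x : ℝ) :
    min (Int.fract (-x)) (1 - Int.fract (-x)) = min (Int.fract x) (1 - Int.fract x) := by
  by_cases h : Int.fract x = 0
  · rw [h, Int.fract_neg_eq_zero.2 h]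
  · rw [Int.fract_neg h, sub_sub_cancel, min_comm]

/-- Averaging over `θ ∈ [1/4, 3/4]`, the difference of the lifts of `g⁺, g⁻ ∈ [0,1)` is
controlled by the quotient distance in ℝ/ℤ:
`∫_{1/4}^{3/4} |g̃⁺_θ - g̃⁻_θ| dθ ≤ (5/2) · min (frac (g⁺ - g⁻), 1 - frac (g⁺ - g⁻))`. -/
theorem integral_abs_liftTheta_sub_le (gp gm : ℝ)
    (hgp : gp ∈ Set.Ico (0 : ℝ) 1) (hgm : gm ∈ Set.Ico (0 : ℝ) 1) :
    ∫ θ in (1/4 : ℝ)..(3/4 : ℝ), |liftTheta θ gp - liftTheta θ gm| ≤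
      (5/2) * min (Int.fract (gp - gm)) (1 - Int.fract (gp - gm)) := by
  wlog h : gm ≤ gp generalizing gp gm
  · rw [intervalIntegral.integral_congr fun θ _ ↦ abs_sub_comm _ _, ← neg_sub, min_fract_neg]
    exact this gm gp hgm hgp (le_of_not_ge h)
  rw [Int.fract_eq_self.2 ⟨sub_nonneg.2 h, by linarith [hgp.2, hgm.1]⟩]
  exact integral_abs_liftTheta_sub_le_of_le hgm.1 h hgp.2.le
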